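/- Let D be a positive integer with D ≡ 2 (mod 4), and let ρ′ be the ℚ-algebra homomorphism from Q = (−2, D)_ℚ into 2×2 complex matrices determined by ρ′(i) = [[√−2, 2√−2·B/A],[0, −√−2]] and ρ′(j) = [[−B, (D − B²)/A],[A, B]] with A = 2 and B = −√−2. Then the set {α ∈ Q : all four entries of ρ′(α) lie in O₂} is exactly the ℤ-submodule of Q spanned by 1, i, (i + j)/2, and ij/2; i.e. this set is the ℤ-order ℤ[1, i, (i+j)/2, ij/2]. -/

import Mathlib

open Quaternion

/-- √−2 : the complex number with square −2 and positive imaginary part. -/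
noncomputable def sqrtNeg2 : ℂ := Real.sqrt 2 * Complex.I

/-- Membership in the ring O₂ = ℤ[√−2] ⊆ ℂ. -/
def InO2 (a : ℂ) : Prop := ∃ m n : ℤ, a = (m : ℂ) + (n : ℂ) * sqrtNeg2

lemma hs2 : sqrtNeg2 ^ 2 = -2 := by
  have h : (Real.sqrt 2 : ℂ) ^ 2 = 2 := by
    norm_cast
    rw [Real.sq_sqrt] <;> norm_num
  simp [sqrtNeg2, mul_pow, Complex.I_sq, h]

lemma inO2_iff (x y : ℚ) :
    InO2 ((x : ℂ) + (y : ℂ) * sqrtNeg2) ↔ (∃ m : ℤ, (m : ℚ) = x) ∧ (∃ n : ℤ, (n : ℚ) = y) := by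
  constructor
  · rintro ⟨m, n, h⟩
    have him : (y : ℝ) * Real.sqrt 2 = (n : ℝ) * Real.sqrt 2 := by
      have := congrArg Complex.im h
      simpa [sqrtNeg2, Complex.add_im, Complex.mul_im] using this
    have h2 : Real.sqrt 2 ≠ 0 := by positivity
    have hy : (y : ℝ) = (n : ℝ) := mul_right_cancel₀ h2 him
    have hre : (x : ℝ) = (m : ℝ) := by
      have := congrArg Complex.re h
      simpa [sqrtNeg2, Complex.add_re, Complex.mul_re] using this
    exact ⟨⟨m, by exact_mod_cast hre.symm⟩, ⟨n, by exact_mod_cast hy.symm⟩⟩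
  · rintro ⟨⟨m, hm⟩, ⟨n, hn⟩⟩
    exact ⟨m, n, by rw [← hm, ← hn]; push_cast; ring⟩

lemma quat_decomp (D : ℚ) (a b c d : ℚ) :
    (⟨a, b, c, d⟩ : ℍ[ℚ, -2, D]) =
      a • (1 : ℍ[ℚ, -2, D]) + b • ⟨0,1,0,0⟩ + c • ⟨0,0,1,0⟩ +
        d • ((⟨0,1,0,0⟩ : ℍ[ℚ, -2, D]) * ⟨0,0,1,0⟩) := by
  ext <;> simp [QuaternionAlgebra.re_mul, QuaternionAlgebra.imI_mul,
    QuaternionAlgebra.imJ_mul, QuaternionAlgebra.imK_mul]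

lemma mem_span_iff (D : ℚ) (x : ℍ[ℚ, -2, D]) :
    x ∈ Submodule.span ℤ
        ({1, ⟨0, 1, 0, 0⟩, ⟨0, 1/2, 1/2, 0⟩, ⟨0, 0, 0, 1/2⟩} : Set ℍ[ℚ, -2, D]) ↔
      ∃ m n p q : ℤ, x = (⟨m, n + p/2, p/2, q/2⟩ : ℍ[ℚ, -2, D]) := by
  have hcombo : ∀ m n p q : ℤ,
      m • (1 : ℍ[ℚ, -2, D]) + n • (⟨0,1,0,0⟩ : ℍ[ℚ, -2, D]) +
        p • (⟨0,1/2,1/2,0⟩ : ℍ[ℚ, -2, D]) + q • (⟨0,0,0,1/2⟩ : ℍ[ℚ, -2, D]) =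
      (⟨m, n + p/2, p/2, q/2⟩ : ℍ[ℚ, -2, D]) := by
    intro m n p q
    ext <;> simp <;> ring
  simp only [Submodule.mem_span_insert, Submodule.mem_span_singleton]
  constructor
  · rintro ⟨m, _, ⟨n, _, ⟨p, _, ⟨q, rfl⟩, rfl⟩, rfl⟩, rfl⟩
    exact ⟨m, n, p, q, by rw [← hcombo]; abel⟩
  · rintro ⟨m, n, p, q, rfl⟩
    exact ⟨m, _, ⟨n, _, ⟨p, _, ⟨q, rfl⟩, rfl⟩, rfl⟩, by rw [← hcombo]; abel⟩

lemma matrix_combo (a b c d : ℚ) (D : ℤ) :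
    a • (1 : Matrix (Fin 2) (Fin 2) ℂ) + b • !![sqrtNeg2, 2; 0, -sqrtNeg2] +
      c • !![sqrtNeg2, ((D:ℂ)+2)/2; 2, -sqrtNeg2] +
      d • !![(2:ℂ), sqrtNeg2*((D:ℂ)-2)/2; -2*sqrtNeg2, -2]
    = !![((a + 2*d : ℚ) : ℂ) + ((b + c : ℚ) : ℂ) * sqrtNeg2,
          ((2*b + c*((D:ℚ)+2)/2 : ℚ) : ℂ) + ((d*((D:ℚ)-2)/2 : ℚ) : ℂ) * sqrtNeg2;
        ((2*c : ℚ) : ℂ) + ((-(2*d) : ℚ) : ℂ) * sqrtNeg2,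
          ((a - 2*d : ℚ) : ℂ) + ((-(b + c) : ℚ) : ℂ) * sqrtNeg2] := by
  rw [Matrix.one_fin_two]
  simp only [Matrix.smul_of, Matrix.smul_cons, Matrix.smul_empty, Matrix.add_cons,
    Matrix.head_cons, Matrix.tail_cons, Rat.smul_def, Matrix.of_add_of]
  push_cast
  ext k l
  fin_cases k <;> fin_cases l <;> simp <;> ring

/-- For D ≡ 2 (mod 4), with A = 2, B = −√−2, the entries-in-O₂ set is the ℤ-order ℤ[1, i, (i+j)/2, ij/2]. -/
theorem stmt_8 (D : ℤ) (hD : 0 < D) (hmod : D % 4 = 2)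
    (ρ' : ℍ[ℚ, -2, (D : ℚ)] →ₐ[ℚ] Matrix (Fin 2) (Fin 2) ℂ)
    (hi : ρ' (⟨0, 1, 0, 0⟩ : ℍ[ℚ, -2, (D : ℚ)]) =
      !![sqrtNeg2, 2 * sqrtNeg2 * (-sqrtNeg2) / (2 : ℂ); 0, -sqrtNeg2])
    (hj : ρ' (⟨0, 0, 1, 0⟩ : ℍ[ℚ, -2, (D : ℚ)]) =
      !![-(-sqrtNeg2), ((D : ℂ) - (-sqrtNeg2) ^ 2) / (2 : ℂ); (2 : ℂ), (-sqrtNeg2)]) :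
    {α : ℍ[ℚ, -2, (D : ℚ)] | ∀ k l : Fin 2, InO2 (ρ' α k l)} =
    (Submodule.span ℤ
      ({1, ⟨0, 1, 0, 0⟩, ⟨0, 1/2, 1/2, 0⟩, ⟨0, 0, 0, 1/2⟩} :
        Set ℍ[ℚ, -2, (D : ℚ)]) : Set ℍ[ℚ, -2, (D : ℚ)]) := by
  obtain ⟨t, ht⟩ : ∃ t : ℤ, D = 4 * t + 2 := ⟨D / 4, by omega⟩
  -- simplify the images of i and j
  have hi' : ρ' (⟨0, 1, 0, 0⟩ : ℍ[ℚ, -2, (D : ℚ)]) = !![sqrtNeg2, 2; 0, -sqrtNeg2] := by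
    rw [hi]
    have e : 2 * sqrtNeg2 * (-sqrtNeg2) / (2:ℂ) = (2:ℂ) := by linear_combination -hs2
    rw [e]
  have hj' : ρ' (⟨0, 0, 1, 0⟩ : ℍ[ℚ, -2, (D : ℚ)]) =
      !![sqrtNeg2, ((D:ℂ)+2)/2; 2, -sqrtNeg2] := by
    rw [hj]
    have e1 : -(-sqrtNeg2) = sqrtNeg2 := neg_neg _
    have e2 : ((D:ℂ) - (-sqrtNeg2)^2)/2 = ((D:ℂ)+2)/2 := by linear_combination -hs2/2
    rw [e1, e2]
  have hprod : (!![sqrtNeg2, (2:ℂ); 0, -sqrtNeg2] : Matrix (Fin 2) (Fin 2) ℂ) *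
      !![sqrtNeg2, ((D:ℂ)+2)/2; 2, -sqrtNeg2]
      = !![(2:ℂ), sqrtNeg2*((D:ℂ)-2)/2; -2*sqrtNeg2, -2] := by
    rw [Matrix.mul_fin_two]
    have e1 : sqrtNeg2 * sqrtNeg2 + 2*2 = (2:ℂ) := by linear_combination hs2
    have e2 : sqrtNeg2 * (((D:ℂ)+2)/2) + 2 * -sqrtNeg2 = sqrtNeg2*((D:ℂ)-2)/2 := by ring
    have e3 : 0 * sqrtNeg2 + -sqrtNeg2 * 2 = -2*sqrtNeg2 := by ring
    have e4 : 0 * (((D:ℂ)+2)/2) + -sqrtNeg2 * -sqrtNeg2 = (-2:ℂ) := by linear_combination hs2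
    rw [e1, e2, e3, e4]
  ext α
  obtain ⟨a, b, c, d⟩ := α
  have hρ : ρ' (⟨a, b, c, d⟩ : ℍ[ℚ, -2, (D : ℚ)]) =
      !![((a + 2*d : ℚ) : ℂ) + ((b + c : ℚ) : ℂ) * sqrtNeg2,
          ((2*b + c*((D:ℚ)+2)/2 : ℚ) : ℂ) + ((d*((D:ℚ)-2)/2 : ℚ) : ℂ) * sqrtNeg2;
        ((2*c : ℚ) : ℂ) + ((-(2*d) : ℚ) : ℂ) * sqrtNeg2,
          ((a - 2*d : ℚ) : ℂ) + ((-(b + c) : ℚ) : ℂ) * sqrtNeg2] := by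
    rw [quat_decomp, map_add, map_add, map_add, map_smul, map_smul, map_smul, map_smul,
      map_one, map_mul, hi', hj', hprod, matrix_combo]
  simp only [Set.mem_setOf_eq, SetLike.mem_coe, hρ, mem_span_iff]
  simp only [Fin.forall_fin_two, Matrix.cons_val', Matrix.cons_val_zero, Matrix.cons_val_one,
    Matrix.head_cons, Matrix.head_fin_const, Matrix.empty_val', Matrix.cons_val_fin_one,
    Matrix.of_apply]
  rw [inO2_iff, inO2_iff, inO2_iff, inO2_iff]
  constructor
  · rintro ⟨⟨⟨⟨m1, h1⟩, ⟨n1, h2⟩⟩, -⟩, ⟨⟨p1, h5⟩, ⟨q1, h6⟩⟩, -⟩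
    refine ⟨m1 + q1, n1 - p1, p1, -q1, ?_⟩
    simp only [QuaternionAlgebra.mk.injEq]
    push_cast at h1 h2 h5 h6 ⊢
    refine ⟨by linarith, by linarith, by linarith, by linarith⟩
  · rintro ⟨m, n, p, q, heq⟩
    simp only [QuaternionAlgebra.mk.injEq] at heq
    obtain ⟨ha, hb, hc, hd⟩ := heq
    subst ha hb hc hd
    rw [ht]
    exact ⟨⟨⟨⟨m + q, by push_cast; ring⟩, ⟨n + p, by push_cast; ring⟩⟩,
      ⟨⟨2*n + p*(t+2), by push_cast; ring⟩, ⟨q*t, by push_cast; ring⟩⟩⟩,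
      ⟨⟨p, by push_cast; ring⟩, ⟨-q, by push_cast; ring⟩⟩,
      ⟨⟨m - q, by push_cast; ring⟩, ⟨-(n + p), by push_cast; ring⟩⟩⟩
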